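/- arXiv:1809.08066 — 4 statements merged into one kernel-verified Lean document; each statement's English description precedes it below -/
import Mathlib

section
/- If E ∈ ℝ^{N×N} is invertible and the matrix E⁻¹A is (asymptotically) stable (all eigenvalues have negative real part), then the generalized cross Gramian W_X := ∫₀^∞ exp(E⁻¹At) E⁻¹ B C exp(E⁻¹At) E⁻¹ dt satisfies the Sylvester-type equation A W_X E + E W_X A = −BC. -/
open Matrix MeasureTheory NormedSpace Filter Topology
open scoped NNReal

/-- Entrywise (improper) integral of a matrix-valued function over `(0, ∞)`. -/
noncomputable def matIntegral {N M : ℕ} (F : ℝ → Matrix (Fin N) (Fin M) ℝ) :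
    Matrix (Fin N) (Fin M) ℝ :=
  Matrix.of fun i j => ∫ t in Set.Ioi (0 : ℝ), F t i j

/-- A real matrix is (asymptotically) stable if all of its (complex) eigenvalues
have negative real part. -/
def IsStableMatrix {N : ℕ} (A : Matrix (Fin N) (Fin N) ℝ) : Prop :=
  ∀ μ ∈ spectrum ℂ (A.map (Complex.ofReal)), μ.re < 0

attribute [local instance] Matrix.linftyOpNormedAddCommGroup Matrix.linftyOpNormedRing
  Matrix.linftyOpNormedAlgebra

/-- `x^n * exp(-x)` is bounded on `[0,∞)`. -/
lemma aux_bdd (n : ℕ) : ∃ c : ℝ, ∀ x : ℝ, 0 ≤ x → x ^ n * Real.exp (-x) ≤ c := by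
  have h := Real.tendsto_pow_mul_exp_neg_atTop_nhds_zero n
  have h1 : ∀ᶠ x in atTop, x ^ n * Real.exp (-x) < 1 := h.eventually_lt_const one_pos
  obtain ⟨T, hT⟩ := h1.exists_forall_of_atTop
  obtain ⟨c0, hc0⟩ := (isCompact_Icc (a := (0:ℝ)) (b := T)).exists_bound_of_continuousOn
    (f := fun x => x ^ n * Real.exp (-x)) (Continuous.continuousOn (by continuity))
  refine ⟨max c0 1, fun x hx => ?_⟩
  rcases le_total x T with hxT | hxT
  · have hb := hc0 x ⟨hx, hxT⟩
    rw [Real.norm_eq_abs] at hb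
    exact le_trans (le_of_abs_le hb) (le_max_left _ _)
  · exact le_trans (hT x hxT).le (le_max_right _ _)

lemma aux_poly_exp (n : ℕ) {b : ℝ} (hb : b < 0) :
    ∃ c : ℝ, ∀ t : ℝ, 0 ≤ t → t ^ n * Real.exp (b * t) ≤ c := by
  obtain ⟨c0, hc0⟩ := aux_bdd n
  refine ⟨((-b)⁻¹) ^ n * c0, fun t ht => ?_⟩
  have hb' : 0 < -b := by linarith
  have key := hc0 ((-b) * t) (by positivity)
  have h2 : ((-b) * t) ^ n * Real.exp (-((-b) * t)) = (-b) ^ n * (t ^ n * Real.exp (b * t)) := by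
    rw [mul_pow]; ring_nf
  rw [h2] at key
  have h3 : t ^ n * Real.exp (b * t) ≤ ((-b) ^ n)⁻¹ * c0 := by
    rw [← le_div_iff₀' (by positivity)] at key
    simpa [div_eq_inv_mul] using key
  rw [inv_pow]; exact h3

lemma entry_le_matrix_norm {n m : ℕ} (A : Matrix (Fin n) (Fin m) ℝ) (i : Fin n) (j : Fin m) :
    |A i j| ≤ ‖A‖ := by
  rw [Matrix.linfty_opNorm_def, ← Real.norm_eq_abs, ← coe_nnnorm]
  have h1 : ‖A i j‖₊ ≤ ∑ j', ‖A i j'‖₊ :=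
    Finset.single_le_sum (f := fun j' => ‖A i j'‖₊) (fun _ _ => zero_le) (Finset.mem_univ j)
  have h2 : (∑ j', ‖A i j'‖₊) ≤ Finset.univ.sup (fun i => ∑ j', ‖A i j'‖₊) :=
    Finset.le_sup (f := fun i => ∑ j', ‖A i j'‖₊) (Finset.mem_univ i)
  exact_mod_cast h1.trans h2

lemma matrix_norm_le_of_entries {n m : ℕ} (A : Matrix (Fin n) (Fin m) ℝ) {b : ℝ} (hb : 0 ≤ b)
    (h : ∀ i j, |A i j| ≤ b) : ‖A‖ ≤ m * b := by
  rw [Matrix.linfty_opNorm_def]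
  have key : ∀ i : Fin n, (∑ j, ‖A i j‖₊ : ℝ≥0) ≤ (⟨m * b, by positivity⟩ : ℝ≥0) := by
    intro i
    apply NNReal.coe_le_coe.mp
    push_cast
    calc (∑ j, (‖A i j‖₊ : ℝ)) = ∑ j, |A i j| := by simp [coe_nnnorm, Real.norm_eq_abs]
      _ ≤ ∑ _j : Fin m, b := Finset.sum_le_sum fun j _ => h i j
      _ = m * b := by simp [Finset.sum_const, Finset.card_univ, nsmul_eq_mul]
  have : Finset.univ.sup (fun i : Fin n => ∑ j', ‖A i j'‖₊) ≤ (⟨m * b, by positivity⟩ : ℝ≥0) :=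
    Finset.sup_le (fun i _ => key i)
  exact_mod_cast this

/-- Decay of `exp (t • Fc) *ᵥ v` for `v` in a generalized eigenspace with eigenvalue `μ`,
`μ.re + δ ≤ -δ`. -/
lemma exp_mulVec_decay_single {N : ℕ} (Fc : Matrix (Fin N) (Fin N) ℂ) {δ : ℝ} (hδ : 0 < δ)
    {μ : ℂ} (hμ : μ.re + δ ≤ -δ) (v : Fin N → ℂ)
    (hv : v ∈ Module.End.maxGenEigenspace (Matrix.toLinAlgEquiv' Fc) μ) :
    ∃ c : ℝ, ∀ t : ℝ, 0 ≤ t → ‖exp (t • Fc) *ᵥ v‖ ≤ c * Real.exp (-δ * t) := by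
  classical
  set k := Module.finrank ℂ (Fin N → ℂ) with hk
  set T := Matrix.toLinAlgEquiv' Fc with hT
  set Nm := Fc - μ • 1 with hNm
  -- v is killed by (Fc - μ•1)^k
  have hker : (Nm ^ k) *ᵥ v = 0 := by
    rw [Module.End.maxGenEigenspace_eq_genEigenspace_finrank, Module.End.mem_genEigenspace_nat,
      LinearMap.mem_ker] at hv
    have hTN : T - μ • 1 = Matrix.toLinAlgEquiv' Nm := by
      rw [hNm, map_sub, _root_.map_smul, _root_.map_one]
    rw [hTN, ← map_pow, Matrix.toLinAlgEquiv'_apply] at hv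
    exact hv
  have hkill : ∀ j : ℕ, k ≤ j → (Nm ^ j) *ᵥ v = 0 := by
    intro j hj
    have h1 : Nm ^ j = Nm ^ (j - k) * Nm ^ k := by rw [← pow_add]; congr 1; omega
    rw [h1, ← Matrix.mulVec_mulVec, hker, Matrix.mulVec_zero]
  -- split exp
  have hsplit : ∀ t : ℝ, exp (t • Fc) = Complex.exp ((t : ℂ) * μ) • exp (t • Nm) := by
    intro t
    have h1 : t • Fc = algebraMap ℂ (Matrix (Fin N) (Fin N) ℂ) ((t : ℂ) * μ) + t • Nm := by
      rw [Algebra.algebraMap_eq_smul_one, hNm, smul_sub]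
      rw [show ((t : ℂ) * μ) • (1 : Matrix (Fin N) (Fin N) ℂ) = t • (μ • 1) by
        rw [← smul_assoc, Complex.real_smul]]
      abel
    have hcomm : Commute (algebraMap ℂ (Matrix (Fin N) (Fin N) ℂ) ((t : ℂ) * μ)) (t • Nm) :=
      Algebra.commute_algebraMap_left _ _
    have hA : exp (algebraMap ℂ (Matrix (Fin N) (Fin N) ℂ) ((t : ℂ) * μ))
        = algebraMap ℂ _ (exp ((t : ℂ) * μ)) := (algebraMap_exp_comm _).symm
    rw [h1, Matrix.exp_add_of_commute _ _ hcomm, hA, ← Complex.exp_eq_exp_ℂ,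
      Algebra.algebraMap_eq_smul_one, smul_mul_assoc, one_mul]
  -- finite sum formula
  have hfin : ∀ t : ℝ, exp (t • Nm) *ᵥ v
      = ∑ j ∈ Finset.range k, ((j.factorial : ℂ))⁻¹ • ((t • Nm) ^ j *ᵥ v) := by
    intro t
    let L : Matrix (Fin N) (Fin N) ℂ →ₗ[ℂ] (Fin N → ℂ) :=
      { toFun := fun M => M *ᵥ v
        map_add' := fun M₁ M₂ => Matrix.add_mulVec M₁ M₂ v
        map_smul' := fun a M => Matrix.smul_mulVec a M v }
    have hsum : Summable (fun j : ℕ => ((j.factorial : ℂ))⁻¹ • (t • Nm) ^ j) :=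
      expSeries_summable' (𝕂 := ℂ) (t • Nm)
    have h1 : exp (t • Nm) *ᵥ v
        = L.toContinuousLinearMap (∑' j : ℕ, ((j.factorial : ℂ))⁻¹ • (t • Nm) ^ j) := by
      rw [exp_eq_tsum (𝕂 := ℂ)]; rfl
    rw [h1, ContinuousLinearMap.map_tsum _ hsum]
    refine (tsum_eq_sum ?_).trans (Finset.sum_congr rfl fun j _ => ?_)
    · intro j hj
      have hjk : k ≤ j := by simpa using hj
      have h2 : (t • Nm) ^ j = (t : ℝ) ^ j • Nm ^ j := smul_pow t Nm j
      rw [_root_.map_smul]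
      show ((j.factorial : ℂ))⁻¹ • ((t • Nm) ^ j *ᵥ v) = 0
      rw [h2, Matrix.smul_mulVec, hkill j hjk, smul_zero, smul_zero]
    · rw [_root_.map_smul]; rfl
  -- choose polynomial bounds
  have hbneg : μ.re + δ < 0 := by linarith
  choose cc hcc using fun j : ℕ => aux_poly_exp j hbneg
  refine ⟨∑ j ∈ Finset.range k, ((j.factorial : ℝ))⁻¹ * ‖Nm ^ j *ᵥ v‖ * cc j, fun t ht => ?_⟩
  have hnorm1 : ‖Complex.exp ((t : ℂ) * μ)‖ = Real.exp (t * μ.re) := by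
    rw [Complex.norm_exp]
    congr 1
    simp [Complex.mul_re]
  calc ‖exp (t • Fc) *ᵥ v‖
      = ‖Complex.exp ((t : ℂ) * μ)‖ * ‖exp (t • Nm) *ᵥ v‖ := by
        rw [hsplit t, Matrix.smul_mulVec, norm_smul]
    _ ≤ Real.exp (t * μ.re) * ∑ j ∈ Finset.range k,
          ((j.factorial : ℝ))⁻¹ * (t ^ j * ‖Nm ^ j *ᵥ v‖) := by
        rw [hnorm1]
        refine mul_le_mul_of_nonneg_left ?_ (Real.exp_pos _).le
        rw [hfin t]
        refine le_trans (norm_sum_le _ _) (Finset.sum_le_sum fun j _ => ?_)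
        rw [smul_pow, Matrix.smul_mulVec, norm_smul, norm_smul]
        simp [abs_of_nonneg ht, abs_of_nonneg (pow_nonneg ht j)]
    _ = ∑ j ∈ Finset.range k,
          ((j.factorial : ℝ))⁻¹ * ‖Nm ^ j *ᵥ v‖ * (t ^ j * Real.exp ((μ.re + δ) * t))
            * Real.exp (-δ * t) := by
        rw [Finset.mul_sum]
        refine Finset.sum_congr rfl fun j _ => ?_
        have hexp : Real.exp ((μ.re + δ) * t) * Real.exp (-δ * t) = Real.exp (t * μ.re) := by
          rw [← Real.exp_add]; ring_nf
        linear_combination (-(((j.factorial : ℝ))⁻¹ * ‖Nm ^ j *ᵥ v‖ * t ^ j)) * hexp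
    _ ≤ ∑ j ∈ Finset.range k,
          ((j.factorial : ℝ))⁻¹ * ‖Nm ^ j *ᵥ v‖ * cc j * Real.exp (-δ * t) := by
        refine Finset.sum_le_sum fun j _ => ?_
        have h1 := hcc j t ht
        gcongr
    _ ≤ (∑ j ∈ Finset.range k, ((j.factorial : ℝ))⁻¹ * ‖Nm ^ j *ᵥ v‖ * cc j)
          * Real.exp (-δ * t) := le_of_eq (Finset.sum_mul _ _ _).symm

lemma exp_mulVec_decay {N : ℕ} (Fc : Matrix (Fin N) (Fin N) ℂ) {δ : ℝ} (hδ : 0 < δ)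
    (hspec : ∀ μ ∈ spectrum ℂ Fc, μ.re + δ ≤ -δ) (v : Fin N → ℂ) :
    ∃ c : ℝ, ∀ t : ℝ, 0 ≤ t → ‖exp (t • Fc) *ᵥ v‖ ≤ c * Real.exp (-δ * t) := by
  classical
  set T := Matrix.toLinAlgEquiv' Fc with hT
  have htop : v ∈ ⨆ μ : ℂ, Module.End.maxGenEigenspace T μ := by
    rw [Module.End.iSup_maxGenEigenspace_eq_top]; trivial
  obtain ⟨f, hf, hsum⟩ := (Submodule.mem_iSup_iff_exists_finsupp _ v).mp htop
  have key : ∀ μ : ℂ, ∃ c : ℝ, ∀ t : ℝ, 0 ≤ t →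
      ‖exp (t • Fc) *ᵥ (f μ)‖ ≤ c * Real.exp (-δ * t) := by
    intro μ
    by_cases h0 : f μ = 0
    · exact ⟨0, fun t ht => by simp [h0, Matrix.mulVec_zero]⟩
    · have hbot : Module.End.maxGenEigenspace T μ ≠ ⊥ := by
        intro hbot
        exact h0 (by simpa [hbot] using hf μ)
      have hgen : (Module.End.genEigenspace T μ) (Module.finrank ℂ (Fin N → ℂ)) ≠ ⊥ := by
        rw [← Module.End.maxGenEigenspace_eq_genEigenspace_finrank]; exact hbot
      have heig : Module.End.HasEigenvalue T μ :=
        Module.End.hasEigenvalue_of_hasGenEigenvalue (k := Module.finrank ℂ (Fin N → ℂ)) hgen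
      have hmem : μ ∈ spectrum ℂ Fc := by
        have h1 : μ ∈ spectrum ℂ T := Module.End.hasEigenvalue_iff_mem_spectrum.mp heig
        rwa [hT, AlgEquiv.spectrum_eq] at h1
      exact exp_mulVec_decay_single Fc hδ (hspec μ hmem) (f μ) (hf μ)
  choose c hc using key
  refine ⟨∑ μ ∈ f.support, c μ, fun t ht => ?_⟩
  have hv : v = ∑ μ ∈ f.support, f μ := by rw [← hsum]; rfl
  have h1 : exp (t • Fc) *ᵥ v = ∑ μ ∈ f.support, exp (t • Fc) *ᵥ (f μ) := by
    rw [hv]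
    have h := map_sum (Matrix.mulVecLin (exp (t • Fc))) (fun μ => f μ) f.support
    simp only [Matrix.mulVecLin_apply] at h
    exact h
  rw [h1, Finset.sum_mul]
  exact le_trans (norm_sum_le _ _) (Finset.sum_le_sum fun μ _ => hc μ t ht)

/-- Entrywise exponential decay of `exp (t • F)` for a stable real matrix. -/
lemma exp_entry_decay {N : ℕ} (F : Matrix (Fin N) (Fin N) ℝ) (hs : IsStableMatrix F) :
    ∃ δ : ℝ, 0 < δ ∧ ∃ c : ℝ, 0 ≤ c ∧ ∀ t : ℝ, 0 ≤ t → ∀ i j,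
      |exp (t • F) i j| ≤ c * Real.exp (-δ * t) := by
  classical
  set Fc := F.map (Complex.ofReal) with hFc
  obtain ⟨δ, hδ, hspec⟩ : ∃ δ : ℝ, 0 < δ ∧ ∀ μ ∈ spectrum ℂ Fc, μ.re + δ ≤ -δ := by
    have hfin := Fc.finite_spectrum
    set s : Finset ℝ := hfin.toFinset.image Complex.re with hs'
    by_cases hne : s.Nonempty
    · have hmax : s.max' hne < 0 := by
        obtain ⟨μr, hμr, hμeq⟩ := Finset.mem_image.mp (s.max'_mem hne)
        rw [← hμeq]
        exact hs _ (hfin.mem_toFinset.mp hμr)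
      refine ⟨-(s.max' hne) / 2, by linarith, fun μ hμ => ?_⟩
      have h1 : μ.re ≤ s.max' hne := by
        apply Finset.le_max'
        exact Finset.mem_image.mpr ⟨μ, hfin.mem_toFinset.mpr hμ, rfl⟩
      linarith
    · refine ⟨1, one_pos, fun μ hμ => absurd ?_ hne⟩
      exact ⟨μ.re, Finset.mem_image.mpr ⟨μ, hfin.mem_toFinset.mpr hμ, rfl⟩⟩
  have hcol : ∀ j : Fin N, ∃ c : ℝ, ∀ t : ℝ, 0 ≤ t →
      ‖exp (t • Fc) *ᵥ Pi.single j 1‖ ≤ c * Real.exp (-δ * t) :=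
    fun j => exp_mulVec_decay Fc hδ hspec _
  choose c hc using hcol
  have hcnn : ∀ j, 0 ≤ c j := by
    intro j
    have := hc j 0 le_rfl
    simpa using le_trans (norm_nonneg _) this
  refine ⟨δ, hδ, ∑ j, c j, Finset.sum_nonneg fun j _ => hcnn j, fun t ht i j => ?_⟩
  -- identify entries with the complex exponential
  have hmap : (exp (t • F)).map Complex.ofReal = exp (t • Fc) := by
    have hcont : Continuous fun M : Matrix (Fin N) (Fin N) ℝ => M.map (Complex.ofReal) :=
      Continuous.matrix_map continuous_id Complex.continuous_ofReal
    have h1 := map_exp (Complex.ofRealAm.mapMatrix :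
        Matrix (Fin N) (Fin N) ℝ →ₐ[ℝ] Matrix (Fin N) (Fin N) ℂ) hcont (t • F)
    have h2 : (Complex.ofRealAm.mapMatrix :
        Matrix (Fin N) (Fin N) ℝ →ₐ[ℝ] Matrix (Fin N) (Fin N) ℂ) (t • F) = t • Fc := by
      ext i j
      simp [AlgHom.mapMatrix_apply, Matrix.map_apply, Complex.ofRealAm_coe, hFc]
    rw [h2] at h1
    have h3 : (Complex.ofRealAm.mapMatrix :
        Matrix (Fin N) (Fin N) ℝ →ₐ[ℝ] Matrix (Fin N) (Fin N) ℂ) (exp (t • F))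
        = (exp (t • F)).map Complex.ofReal := by
      ext i j; simp [AlgHom.mapMatrix_apply, Matrix.map_apply, Complex.ofRealAm_coe]
    exact h3.symm.trans h1
  calc |exp (t • F) i j| = ‖(exp (t • Fc)) i j‖ := by
        rw [← hmap]
        simp [Matrix.map_apply, Complex.norm_real]
    _ ≤ ‖exp (t • Fc) *ᵥ Pi.single j 1‖ := by
        have h4 := norm_le_pi_norm (exp (t • Fc) *ᵥ Pi.single j 1) i
        simpa [Matrix.mulVec_single] using h4
    _ ≤ c j * Real.exp (-δ * t) := hc j t ht
    _ ≤ (∑ j', c j') * Real.exp (-δ * t) := by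
        have : c j ≤ ∑ j', c j' := Finset.single_le_sum (fun j' _ => hcnn j') (Finset.mem_univ j)
        gcongr

theorem generalized_cross_gramian_sylvester
    {N M : ℕ} (A E : Matrix (Fin N) (Fin N) ℝ)
    (B : Matrix (Fin N) (Fin M) ℝ) (C : Matrix (Fin M) (Fin N) ℝ)
    (hE : IsUnit E) (hstab : IsStableMatrix (E⁻¹ * A))
    (W : Matrix (Fin N) (Fin N) ℝ)
    (hW : W = matIntegral fun t =>
      NormedSpace.exp (t • (E⁻¹ * A)) * E⁻¹ * B * C *
        NormedSpace.exp (t • (E⁻¹ * A)) * E⁻¹) :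
    A * W * E + E * W * A = -(B * C) := by
  classical
  have hEdet : IsUnit E.det := (Matrix.isUnit_iff_isUnit_det E).mp hE
  have hEinv : E * E⁻¹ = 1 := Matrix.mul_nonsing_inv E hEdet
  have hinvE : E⁻¹ * E = 1 := Matrix.nonsing_inv_mul E hEdet
  set F' : Matrix (Fin N) (Fin N) ℝ := E⁻¹ * A with hF'
  set G : ℝ → Matrix (Fin N) (Fin N) ℝ := fun t => exp (t • F') with hGdef
  set K : Matrix (Fin N) (Fin N) ℝ := E⁻¹ * B * C with hKdef
  set X : ℝ → Matrix (Fin N) (Fin N) ℝ := fun t => G t * K * G t with hXdef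
  obtain ⟨δ, hδ, c, hcnn, hc⟩ := exp_entry_decay F' hstab
  have hGn : ∀ t : ℝ, 0 ≤ t → ‖G t‖ ≤ ((N : ℝ) * c) * Real.exp (-δ * t) := by
    intro t ht
    have h := matrix_norm_le_of_entries (exp (t • F')) (b := c * Real.exp (-δ * t))
      (by positivity) (fun i j => hc t ht i j)
    calc ‖G t‖ ≤ (N : ℝ) * (c * Real.exp (-δ * t)) := h
      _ = ((N : ℝ) * c) * Real.exp (-δ * t) := by ring
  set cX : ℝ := ((N : ℝ) * c) * ‖K‖ * ((N : ℝ) * c) with hcX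
  have hXn : ∀ t : ℝ, 0 ≤ t → ‖X t‖ ≤ cX * Real.exp (-(2 * δ) * t) := by
    intro t ht
    have h1 : ‖X t‖ ≤ ‖G t‖ * ‖K‖ * ‖G t‖ :=
      le_trans (norm_mul_le _ _) (mul_le_mul_of_nonneg_right (norm_mul_le _ _) (norm_nonneg _))
    have h2 := hGn t ht
    have hE2 : Real.exp (-δ * t) * Real.exp (-δ * t) = Real.exp (-(2 * δ) * t) := by
      rw [← Real.exp_add]; ring_nf
    calc ‖X t‖ ≤ ‖G t‖ * ‖K‖ * ‖G t‖ := h1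
      _ ≤ (((N : ℝ) * c) * Real.exp (-δ * t)) * ‖K‖ * (((N : ℝ) * c) * Real.exp (-δ * t)) := by
          gcongr
      _ = cX * (Real.exp (-δ * t) * Real.exp (-δ * t)) := by rw [hcX]; ring
      _ = cX * Real.exp (-(2 * δ) * t) := by rw [hE2]
  have hcXnn : 0 ≤ cX := by
    have := le_trans (norm_nonneg (X 0)) (hXn 0 le_rfl)
    simpa using this
  -- derivative
  have hGd : ∀ t : ℝ, HasDerivAt G (F' * G t) t := fun t => hasDerivAt_exp_smul_const' F' t
  have hGcomm : ∀ t : ℝ, F' * G t = G t * F' := fun t =>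
    (((Commute.refl F').smul_right t).exp_right).eq
  have hXd : ∀ t : ℝ, HasDerivAt X (F' * X t + X t * F') t := by
    intro t
    have h := ((hGd t).mul_const K).mul (hGd t)
    convert h using 1
    any_goals rfl
    have e1 : F' * X t = F' * G t * K * G t := by simp only [hXdef, Matrix.mul_assoc]
    have e2 : X t * F' = G t * K * (F' * G t) := by
      rw [hGcomm t]; simp only [hXdef, Matrix.mul_assoc]
    rw [e1, e2]
  set D : ℝ → Matrix (Fin N) (Fin N) ℝ := fun t => F' * X t + X t * F' with hDdef
  have hXc : Continuous X := continuous_iff_continuousAt.mpr fun t => (hXd t).continuousAt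
  have hDc : Continuous D := (continuous_const.matrix_mul hXc).add (hXc.matrix_mul continuous_const)
  have hDn : ∀ t : ℝ, 0 ≤ t → ‖D t‖ ≤ (2 * ‖F'‖ * cX) * Real.exp (-(2 * δ) * t) := by
    intro t ht
    have h1 : ‖D t‖ ≤ ‖F'‖ * ‖X t‖ + ‖X t‖ * ‖F'‖ :=
      le_trans (norm_add_le _ _) (add_le_add (norm_mul_le _ _) (norm_mul_le _ _))
    have h2 := hXn t ht
    have h3 := norm_nonneg F'
    nlinarith [norm_nonneg (X t), Real.exp_pos (-(2 * δ) * t)]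
  -- integrability of entries
  have hXint : ∀ i k : Fin N, IntegrableOn (fun t => X t i k) (Set.Ioi (0 : ℝ)) := by
    intro i k
    refine Integrable.mono' ((exp_neg_integrableOn_Ioi 0
        (by positivity : (0 : ℝ) < 2 * δ)).const_mul cX)
      ((hXc.matrix_elem i k).aestronglyMeasurable.restrict) ?_
    filter_upwards [ae_restrict_mem measurableSet_Ioi] with t ht
    exact le_trans (entry_le_matrix_norm _ i k) (hXn t ht.le)
  have hDint : ∀ i k : Fin N, IntegrableOn (fun t => D t i k) (Set.Ioi (0 : ℝ)) := by
    intro i k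
    refine Integrable.mono' ((exp_neg_integrableOn_Ioi 0
        (by positivity : (0 : ℝ) < 2 * δ)).const_mul (2 * ‖F'‖ * cX))
      ((hDc.matrix_elem i k).aestronglyMeasurable.restrict) ?_
    filter_upwards [ae_restrict_mem measurableSet_Ioi] with t ht
    exact le_trans (entry_le_matrix_norm _ i k) (hDn t ht.le)
  -- limit of entries at infinity
  have hXtend : ∀ i j : Fin N, Tendsto (fun t => X t i j) atTop (𝓝 0) := by
    intro i j
    apply squeeze_zero_norm' (a := fun t => cX * Real.exp (-(2 * δ) * t))
    · filter_upwards [eventually_ge_atTop (0 : ℝ)] with t ht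
      exact le_trans (entry_le_matrix_norm _ i j) (hXn t ht)
    · have h1 : Tendsto (fun t : ℝ => -(2 * δ) * t) atTop atBot :=
        Tendsto.const_mul_atTop_of_neg (by linarith : -(2 * δ) < 0) tendsto_id
      have h2 := Real.tendsto_exp_atBot.comp h1
      have h3 := h2.const_mul cX
      simpa using h3
  have hX0 : X 0 = K := by
    have : G 0 = 1 := by simp only [hGdef, zero_smul, exp_zero]
    simp [hXdef, this]
  -- FTC on each entry
  have hFTC : ∀ i j : Fin N, (∫ t in Set.Ioi (0 : ℝ), D t i j) = -(K i j) := by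
    intro i j
    have hderiv : ∀ x ∈ Set.Ici (0 : ℝ), HasDerivAt (fun t => X t i j) (D x i j) x := by
      intro x _
      let Φ : Matrix (Fin N) (Fin N) ℝ →ₗ[ℝ] ℝ :=
        { toFun := fun M => M i j, map_add' := fun _ _ => rfl, map_smul' := fun _ _ => rfl }
      exact Φ.toContinuousLinearMap.hasFDerivAt.comp_hasDerivAt x (hXd x)
    have h := integral_Ioi_of_hasDerivAt_of_tendsto' hderiv (hDint i j) (hXtend i j)
    rw [h, hX0]
    simp
  -- pushing constant multiplications through the integral
  have hrightP : ∀ (P : Matrix (Fin N) (Fin N) ℝ) (i j : Fin N),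
      IntegrableOn (fun t => (X t * P) i j) (Set.Ioi (0 : ℝ)) ∧
      (∫ t in Set.Ioi (0 : ℝ), (X t * P) i j) = (matIntegral X * P) i j := by
    intro P i j
    constructor
    · simp only [Matrix.mul_apply]
      exact integrable_finset_sum _ fun k _ => (hXint i k).mul_const _
    · simp only [Matrix.mul_apply]
      rw [integral_finset_sum _ fun k _ => (hXint i k).mul_const _]
      refine Finset.sum_congr rfl fun k _ => ?_
      rw [integral_mul_const]
      simp [matIntegral]
  have hleftP : ∀ (P : Matrix (Fin N) (Fin N) ℝ) (i j : Fin N),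
      IntegrableOn (fun t => (P * X t) i j) (Set.Ioi (0 : ℝ)) ∧
      (∫ t in Set.Ioi (0 : ℝ), (P * X t) i j) = (P * matIntegral X) i j := by
    intro P i j
    constructor
    · simp only [Matrix.mul_apply]
      exact integrable_finset_sum _ fun k _ => (hXint k j).const_mul _
    · simp only [Matrix.mul_apply]
      rw [integral_finset_sum _ fun k _ => (hXint k j).const_mul _]
      refine Finset.sum_congr rfl fun k _ => ?_
      rw [integral_const_mul]
      simp [matIntegral]
  set Z : Matrix (Fin N) (Fin N) ℝ := matIntegral X with hZ
  -- the Sylvester equation for F', Z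
  have hsyl : F' * Z + Z * F' = -K := by
    ext i j
    rw [Matrix.add_apply, ← (hleftP F' i j).2, ← (hrightP F' i j).2,
      ← integral_add (hleftP F' i j).1 (hrightP F' i j).1]
    have : (fun t => (F' * X t) i j + (X t * F') i j) = fun t => D t i j := by
      funext t; rw [hDdef]; simp [Matrix.add_apply]
    rw [this, hFTC i j, Matrix.neg_apply]
  -- W = Z * E⁻¹
  have hWX : (fun t => exp (t • F') * E⁻¹ * B * C * exp (t • F') * E⁻¹)
      = fun t => X t * E⁻¹ := by
    funext t
    simp only [hXdef, hGdef, hKdef, Matrix.mul_assoc]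
  have hWZ : W = Z * E⁻¹ := by
    rw [hW, hWX, hZ]
    ext i j
    have h := (hrightP E⁻¹ i j).2
    rw [← h]
    simp [matIntegral]
  -- final algebra
  have hA : A = E * F' := by rw [hF', ← Matrix.mul_assoc, hEinv, Matrix.one_mul]
  have h1 : A * W * E = E * (F' * Z) := by
    rw [hA, hWZ]
    calc E * F' * (Z * E⁻¹) * E = E * (F' * (Z * (E⁻¹ * E))) := by
          simp only [Matrix.mul_assoc]
      _ = E * (F' * Z) := by rw [hinvE, Matrix.mul_one]
  have h2 : E * W * A = E * (Z * F') := by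
    rw [hA, hWZ]
    calc E * (Z * E⁻¹) * (E * F') = E * (Z * (E⁻¹ * (E * F'))) := by
          simp only [Matrix.mul_assoc]
      _ = E * (Z * F') := by rw [← Matrix.mul_assoc E⁻¹ E F', hinvE, Matrix.one_mul]
  rw [h1, h2, ← Matrix.mul_add, hsyl, Matrix.mul_neg, hKdef]
  have h3 : E * (E⁻¹ * B * C) = B * C := by
    calc E * (E⁻¹ * B * C) = E * E⁻¹ * B * C := by simp only [Matrix.mul_assoc]
      _ = B * C := by rw [hEinv, Matrix.one_mul]
  rw [h3]
end

section
/- Let A be stable and suppose the system is symmetric in the sense that there exists an invertible symmetric matrix P with A P = P Aᵀ and Bᵀ = C P (so the Hankel operator is symmetric). Then the cross Gramian W_X = ∫₀^∞ exp(At) BC exp(At) dt satisfies W_X² = W_C W_O, where W_C = ∫₀^∞ exp(At) B Bᵀ exp(Aᵀt) dt and W_O = ∫₀^∞ exp(Aᵀt) Cᵀ C exp(At) dt. -/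
open Matrix MeasureTheory

namespace CGAux

open NormedSpace

variable {n : Type*} [Fintype n] [DecidableEq n]

attribute [local instance] Matrix.linftyOpNormedRing Matrix.linftyOpNormedAlgebra

lemma pow_mulVec_eigen (M : Matrix n n ℂ) (v : n → ℂ) (l : ℂ)
    (hv : M *ᵥ v = l • v) (k : ℕ) : M ^ k *ᵥ v = l ^ k • v := by
  induction k with
  | zero => simp
  | succ k ih =>
      rw [pow_succ, ← Matrix.mulVec_mulVec, hv, Matrix.mulVec_smul, ih, smul_smul, pow_succ,
        mul_comm]

lemma exp_mulVec_eigen (M : Matrix n n ℂ) (v : n → ℂ) (l : ℂ)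
    (hv : M *ᵥ v = l • v) : exp M *ᵥ v = Complex.exp l • v := by
  classical
  let L : Matrix n n ℂ →ₗ[ℂ] (n → ℂ) :=
    { toFun := fun X => X *ᵥ v
      map_add' := fun X Y => Matrix.add_mulVec X Y v
      map_smul' := fun c X => Matrix.smul_mulVec c X v }
  let Lc : Matrix n n ℂ →L[ℂ] (n → ℂ) := LinearMap.toContinuousLinearMap L
  have h1 : exp M *ᵥ v = Lc (exp M) := rfl
  rw [h1, exp_eq_tsum ℂ, Lc.map_tsum (expSeries_summable' (𝕂 := ℂ) M)]
  have h2 : ∀ k : ℕ, Lc (((k.factorial : ℂ))⁻¹ • M ^ k) = (((k.factorial : ℂ))⁻¹ * l ^ k) • v := by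
    intro k
    show (((k.factorial : ℂ))⁻¹ • M ^ k) *ᵥ v = _
    rw [Matrix.smul_mulVec, pow_mulVec_eigen M v l hv k, smul_smul]
  simp_rw [h2]
  have hs : Summable fun k : ℕ => ((k.factorial : ℂ))⁻¹ * l ^ k := by
    simpa [smul_eq_mul] using expSeries_summable' (𝕂 := ℂ) l
  rw [hs.tsum_smul_const]
  congr 1
  rw [Complex.exp_eq_exp_ℂ, exp_eq_tsum ℂ]
  simp_rw [smul_eq_mul]

lemma spectrum_exp_subset (M : Matrix n n ℂ) {μ : ℂ}
    (hμ : μ ∈ spectrum ℂ (exp M)) : ∃ l ∈ spectrum ℂ M, μ = Complex.exp l := by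
  classical
  set f : Module.End ℂ (n → ℂ) := Matrix.toLinAlgEquiv' (exp M) with hf
  set g : Module.End ℂ (n → ℂ) := Matrix.toLinAlgEquiv' M with hg
  have hμ' : Module.End.HasEigenvalue f μ := by
    rw [Module.End.hasEigenvalue_iff_mem_spectrum, hf, AlgEquiv.spectrum_eq]
    exact hμ
  have hcomm : Commute M (exp M) := (Commute.refl M).exp_right
  have key : ∀ x, f (g x) = g (f x) := by
    intro x
    have hfg : f * g = g * f := by
      rw [hf, hg, ← _root_.map_mul, ← _root_.map_mul, hcomm.eq]
    calc f (g x) = (f * g) x := rfl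
    _ = (g * f) x := by rw [hfg]
    _ = g (f x) := rfl
  have hE : ∀ x ∈ Module.End.eigenspace f μ, g x ∈ Module.End.eigenspace f μ := by
    intro x hx
    rw [Module.End.mem_eigenspace_iff] at hx ⊢
    rw [key, hx, _root_.map_smul]
  have hnt : Nontrivial (Module.End.eigenspace f μ) :=
    Submodule.nontrivial_iff_ne_bot.2 hμ'
  obtain ⟨l, hl⟩ := Module.End.exists_eigenvalue (LinearMap.restrict g hE)
  obtain ⟨w, hw⟩ := hl.exists_hasEigenvector
  have hw0 : (w : n → ℂ) ≠ 0 := fun h => hw.right (Subtype.coe_injective h)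
  have hgw : g (w : n → ℂ) = l • (w : n → ℂ) := by
    have h3 := hw.apply_eq_smul
    have h4 := congrArg Subtype.val h3
    simpa [LinearMap.restrict_apply] using h4
  have hMw : M *ᵥ (w : n → ℂ) = l • (w : n → ℂ) := by
    simpa [hg, Matrix.toLinAlgEquiv'_apply] using hgw
  refine ⟨l, ?_, ?_⟩
  · rw [← AlgEquiv.spectrum_eq (Matrix.toLinAlgEquiv' (R := ℂ)) M,
      ← Module.End.hasEigenvalue_iff_mem_spectrum]
    exact Module.End.hasEigenvalue_of_hasEigenvector
      ⟨Module.End.mem_eigenspace_iff.2 hgw, hw0⟩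
  · have h1 : exp M *ᵥ (w : n → ℂ) = μ • (w : n → ℂ) := by
      have h5 := w.2
      rw [Module.End.mem_eigenspace_iff] at h5
      simpa [hf, Matrix.toLinAlgEquiv'_apply] using h5
    have h2 := exp_mulVec_eigen M w l hMw
    rw [h1] at h2
    have h6 : (μ - Complex.exp l) • (w : n → ℂ) = 0 := by
      rw [sub_smul, h2, sub_self]
    rcases smul_eq_zero.1 h6 with h7 | h7
    · exact (sub_eq_zero.1 h7)
    · exact absurd h7 hw0

lemma norm_one_le [Nonempty n] : ‖(1 : Matrix n n ℂ)‖ ≤ 1 := by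
  letI : NormOneClass (Matrix n n ℂ) := Matrix.linfty_opNormOneClass
  exact norm_one.le

lemma decay [Nonempty n] (M : Matrix n n ℂ) (h : ∀ μ ∈ spectrum ℂ M, μ.re < 0) :
    ∃ K ε : ℝ, 0 < ε ∧ ∀ t : ℝ, 0 ≤ t → ‖exp (t • M)‖ ≤ K * Real.exp (-ε * t) := by
  classical
  set X : Matrix n n ℂ := exp M with hX
  have hsr : spectralRadius ℂ X < 1 := by
    have : ∀ z ∈ spectrum ℂ X, ‖z‖₊ < 1 := by
      intro z hz
      obtain ⟨l, hl, rfl⟩ := spectrum_exp_subset M hz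
      have : ‖Complex.exp l‖ < 1 := by
        rw [Complex.norm_exp]
        exact Real.exp_lt_one_iff.2 (h l hl)
      simpa [← NNReal.coe_lt_coe] using this
    simpa using spectrum.spectralRadius_lt_of_forall_lt X this
  have hg := spectrum.pow_nnnorm_pow_one_div_tendsto_nhds_spectralRadius X
  have hev := hg.eventually_lt_const hsr
  obtain ⟨m, hm1, hm⟩ : ∃ m : ℕ, 1 ≤ m ∧ (‖X ^ m‖₊ : ENNReal) ^ (1 / (m : ℝ)) < 1 := by
    obtain ⟨m, hm, hm'⟩ := ((Filter.eventually_ge_atTop 1).and hev).exists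
    exact ⟨m, hm, hm'⟩
  have hXm : ‖X ^ m‖ < 1 := by
    have hm0 : (m : ℝ) ≠ 0 := by positivity
    have h2 : ((‖X ^ m‖₊ : ENNReal) ^ (1 / (m : ℝ))) ^ (m : ℝ) < 1 :=
      ENNReal.rpow_lt_one (by exact_mod_cast hm) (by positivity)
    rw [← ENNReal.rpow_mul, one_div, inv_mul_cancel₀ hm0, ENNReal.rpow_one] at h2
    have h3 : ‖X ^ m‖₊ < 1 := by exact_mod_cast h2
    simpa [← NNReal.coe_lt_coe] using h3
  set r : ℝ := max ‖X ^ m‖ 2⁻¹ with hr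
  have hr0 : (0:ℝ) < r := lt_of_lt_of_le (by norm_num) (le_max_right _ _)
  have hr1 : r < 1 := max_lt hXm (by norm_num)
  have hXr : ‖X ^ m‖ ≤ r := le_max_left _ _
  have hlog : Real.log r < 0 := Real.log_neg hr0 hr1
  have hm0' : (0:ℝ) < (m:ℝ) := by exact_mod_cast hm1
  obtain ⟨C, hC⟩ : ∃ C, ∀ s ∈ Set.Icc (0:ℝ) (m:ℝ), ‖exp (s • M)‖ ≤ C := by
    have hcont : ContinuousOn (fun s : ℝ => exp (s • M)) (Set.Icc 0 (m:ℝ)) :=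
      (exp_continuous.comp (continuous_id.smul continuous_const)).continuousOn
    exact isCompact_Icc.exists_bound_of_continuousOn hcont
  have hC0 : 0 ≤ C := le_trans (norm_nonneg _) (hC 0 ⟨le_refl _, by positivity⟩)
  have hpow : ∀ q : ℕ, ‖(X ^ m) ^ q‖ ≤ r ^ q := by
    intro q
    induction q with
    | zero => simpa using norm_one_le
    | succ q ih =>
        rw [pow_succ, pow_succ]
        exact le_trans (norm_mul_le _ _)
          (mul_le_mul ih hXr (norm_nonneg _) (by positivity))
  refine ⟨C / r, -Real.log r / m, div_pos (neg_pos.2 hlog) hm0', ?_⟩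
  intro t ht
  set q : ℕ := ⌊t / m⌋₊ with hq
  have hq1 : (q : ℝ) * m ≤ t := by
    have := Nat.floor_le (show 0 ≤ t / m by positivity)
    calc (q:ℝ) * m ≤ (t / m) * m := by nlinarith
    _ = t := by field_simp
  have hq2 : t < ((q:ℝ) + 1) * m := by
    have := Nat.lt_floor_add_one (t / m)
    calc t = (t / m) * m := by field_simp
    _ < ((q:ℝ) + 1) * m := by nlinarith
  set s : ℝ := t - q * m with hs
  have hs0 : 0 ≤ s := by simp [hs]; linarith
  have hsm : s ≤ (m:ℝ) := by simp [hs]; nlinarith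
  have hsplit : exp (t • M) = (X ^ m) ^ q * exp (s • M) := by
    have h1 : t • M = ((m * q : ℕ) : ℝ) • M + s • M := by
      rw [← add_smul]
      congr 1
      push_cast
      simp [hs]
      ring
    rw [h1]; erw [NormedSpace.exp_add_of_commute (((Commute.refl M).smul_left _).smul_right _)]
    rw [Nat.cast_smul_eq_nsmul ℝ]; erw [NormedSpace.exp_nsmul]; rw [pow_mul]; rfl
  have hb1 : ‖exp (t • M)‖ ≤ r ^ q * C := by
    rw [hsplit]
    exact le_trans (norm_mul_le _ _)
      (mul_le_mul (hpow q) (hC s ⟨hs0, hsm⟩) (norm_nonneg _) (by positivity))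
  have hb2 : r ^ q ≤ Real.exp (-(-Real.log r / m) * t) * r⁻¹ := by
    have he : (r:ℝ) ^ (q:ℝ) ≤ r ^ (t / m - 1 : ℝ) := by
      apply Real.rpow_le_rpow_of_exponent_ge hr0 hr1.le
      have h7 : t / m < (q:ℝ) + 1 := (div_lt_iff₀ hm0').2 (by nlinarith)
      linarith
    rw [← Real.rpow_natCast r q]
    refine le_trans he (le_of_eq ?_)
    rw [Real.rpow_def_of_pos hr0, ← Real.exp_log hr0]
    rw [← Real.exp_neg, ← Real.exp_add]
    congr 1
    field_simp
    rw [Real.log_exp]; ring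
  calc ‖exp (t • M)‖ ≤ r ^ q * C := hb1
  _ ≤ (Real.exp (-(-Real.log r / m) * t) * r⁻¹) * C :=
      mul_le_mul_of_nonneg_right hb2 hC0
  _ = C / r * Real.exp (-(-Real.log r / m) * t) := by field_simp

lemma entry_le_norm (X : Matrix n n ℂ) (i j : n) : ‖X i j‖ ≤ ‖X‖ := by
  have h1 : ‖X i j‖₊ ≤ ∑ j' : n, ‖X i j'‖₊ :=
    Finset.single_le_sum (f := fun j' => ‖X i j'‖₊) (fun _ _ => zero_le) (Finset.mem_univ j)
  have h2 : (∑ j' : n, ‖X i j'‖₊) ≤ Finset.univ.sup fun i : n => ∑ j' : n, ‖X i j'‖₊ :=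
    Finset.le_sup (f := fun i : n => ∑ j' : n, ‖X i j'‖₊) (Finset.mem_univ i)
  have h3 := le_trans h1 h2
  rw [← Matrix.linfty_opNNNorm_def] at h3
  exact_mod_cast h3

lemma real_decay {N : ℕ} (A : Matrix (Fin N) (Fin N) ℝ) (hstab : IsStableMatrix A) :
    ∃ K ε : ℝ, 0 < ε ∧ ∀ t : ℝ, 0 ≤ t → ∀ i j,
      |exp (t • A) i j| ≤ K * Real.exp (-ε * t) := by
  rcases Nat.eq_zero_or_pos N with hN | hN
  · exact ⟨1, 1, one_pos, fun t ht i j => by subst hN; exact i.elim0⟩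
  haveI : Nonempty (Fin N) := ⟨⟨0, hN⟩⟩
  obtain ⟨K, ε, hε, hb⟩ := decay (A.map Complex.ofReal) hstab
  refine ⟨K, ε, hε, fun t ht i j => ?_⟩
  have hcont : Continuous (Complex.ofRealHom.mapMatrix :
      Matrix (Fin N) (Fin N) ℝ → Matrix (Fin N) (Fin N) ℂ) :=
    Continuous.matrix_map continuous_id Complex.continuous_ofReal
  have hmap : (exp (t • A)).map Complex.ofReal
      = exp (t • A.map Complex.ofReal) := by
    have h1 : (exp (t • A)).map Complex.ofReal
        = Complex.ofRealHom.mapMatrix (exp (t • A)) := rfl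
    rw [h1]; refine (map_exp _ hcont (t • A)).trans ?_
    have h2 : Complex.ofRealHom.mapMatrix (t • A) = t • A.map Complex.ofReal := by
      ext i j
      simp [Complex.real_smul]
    rw [h2]; rfl
  have h4 : |exp (t • A) i j| = ‖(exp (t • A.map Complex.ofReal)) i j‖ := by
    rw [← hmap]
    simp [Matrix.map_apply, Complex.norm_real]
  rw [h4]
  exact le_trans (entry_le_norm _ i j) (hb t ht)

lemma integrable_entries {N : ℕ} (A : Matrix (Fin N) (Fin N) ℝ) (hstab : IsStableMatrix A)
    (Q : Matrix (Fin N) (Fin N) ℝ) (i j : Fin N) :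
    IntegrableOn (fun t => (exp (t • A) * Q * exp (t • A)) i j) (Set.Ioi (0:ℝ)) := by
  obtain ⟨K, ε, hε, hb⟩ := real_decay A hstab
  have hK0 : 0 ≤ K := by
    have := hb 0 le_rfl i j
    have h0 : (0:ℝ) ≤ K * Real.exp (-ε * 0) := le_trans (abs_nonneg _) this
    simpa using h0
  have hcont : Continuous fun t : ℝ => (exp (t • A) * Q * exp (t • A)) i j := by
    have h1 : Continuous fun t : ℝ => exp (t • A) :=
      exp_continuous.comp (continuous_id.smul continuous_const)
    have h2 : Continuous fun t : ℝ => exp (t • A) * Q * exp (t • A) :=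
      (h1.mul continuous_const).mul h1
    exact (continuous_apply j).comp ((continuous_apply i).comp h2)
  set S : ℝ := ∑ k : Fin N, ∑ l : Fin N, |Q l k| with hS
  have hS0 : 0 ≤ S := Finset.sum_nonneg fun _ _ => Finset.sum_nonneg fun _ _ => abs_nonneg _
  refine Integrable.mono'
    (g := fun t => (K * K * S) * Real.exp (-(2 * ε) * t))
    (((exp_neg_integrableOn_Ioi 0 (by positivity)).const_mul (K * K * S)))
    hcont.aestronglyMeasurable ?_
  refine (ae_restrict_iff' measurableSet_Ioi).2 (ae_of_all _ fun t ht => ?_)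
  have ht0 : (0:ℝ) ≤ t := le_of_lt ht
  set E : Matrix (Fin N) (Fin N) ℝ := exp (t • A) with hE
  set e : ℝ := Real.exp (-ε * t) with he
  have he0 : 0 ≤ K * e := by positivity
  have hbe : ∀ a b, |E a b| ≤ K * e := fun a b => hb t ht0 a b
  have hentry : (E * Q * E) i j = ∑ k : Fin N, ∑ l : Fin N, E i l * Q l k * E k j := by
    rw [Matrix.mul_apply]
    refine Finset.sum_congr rfl fun k _ => ?_
    rw [Matrix.mul_apply, Finset.sum_mul]
  rw [Real.norm_eq_abs, hentry]
  calc |∑ k : Fin N, ∑ l : Fin N, E i l * Q l k * E k j|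
      ≤ ∑ k : Fin N, ∑ l : Fin N, |E i l * Q l k * E k j| := by
        refine le_trans (Finset.abs_sum_le_sum_abs _ _) ?_
        exact Finset.sum_le_sum fun k _ => Finset.abs_sum_le_sum_abs _ _
  _ ≤ ∑ k : Fin N, ∑ l : Fin N, (K * e) * |Q l k| * (K * e) := by
        refine Finset.sum_le_sum fun k _ => Finset.sum_le_sum fun l _ => ?_
        rw [abs_mul, abs_mul]
        exact mul_le_mul
          (mul_le_mul (hbe i l) le_rfl (abs_nonneg _) he0)
          (hbe k j) (abs_nonneg _) (by positivity)
  _ = (K * e) * (K * e) * ∑ k : Fin N, ∑ l : Fin N, |Q l k| := by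
        rw [Finset.mul_sum]
        refine Finset.sum_congr rfl fun k _ => ?_
        rw [Finset.mul_sum]
        refine Finset.sum_congr rfl fun l _ => by ring
  _ = (K * K * S) * Real.exp (-(2 * ε) * t) := by
        have h8 : e * e = Real.exp (-(2 * ε) * t) := by
          rw [he, ← Real.exp_add]; congr 1; ring
        calc (K * e) * (K * e) * ∑ k : Fin N, ∑ l : Fin N, |Q l k|
            = (K * K * ∑ k : Fin N, ∑ l : Fin N, |Q l k|) * (e * e) := by ring
        _ = (K * K * S) * Real.exp (-(2 * ε) * t) := by rw [h8, hS]

lemma matIntegral_mul_right {N : ℕ} (F : ℝ → Matrix (Fin N) (Fin N) ℝ)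
    (hF : ∀ i j, IntegrableOn (fun t => F t i j) (Set.Ioi (0:ℝ)))
    (P : Matrix (Fin N) (Fin N) ℝ) :
    matIntegral (fun t => F t * P) = matIntegral F * P := by
  ext i j
  simp only [matIntegral, Matrix.mul_apply, Matrix.of_apply]
  rw [MeasureTheory.integral_finset_sum _ fun k _ => (hF i k).mul_const (P k j)]
  exact Finset.sum_congr rfl fun k _ => MeasureTheory.integral_mul_const _ _

lemma matIntegral_mul_left {N : ℕ} (F : ℝ → Matrix (Fin N) (Fin N) ℝ)
    (hF : ∀ i j, IntegrableOn (fun t => F t i j) (Set.Ioi (0:ℝ)))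
    (P : Matrix (Fin N) (Fin N) ℝ) :
    matIntegral (fun t => P * F t) = P * matIntegral F := by
  ext i j
  simp only [matIntegral, Matrix.mul_apply, Matrix.of_apply]
  rw [MeasureTheory.integral_finset_sum _ fun k _ => (hF k j).const_mul (P i k)]
  exact Finset.sum_congr rfl fun k _ => MeasureTheory.integral_const_mul _ _

end CGAux

open NormedSpace

theorem cross_gramian_sq_eq_gramian_product_of_symmetric_system
    {N M : ℕ} (A : Matrix (Fin N) (Fin N) ℝ)
    (B : Matrix (Fin N) (Fin M) ℝ) (C : Matrix (Fin M) (Fin N) ℝ)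
    (hstab : IsStableMatrix A)
    (P : Matrix (Fin N) (Fin N) ℝ) (hPunit : IsUnit P) (hPsymm : Pᵀ = P)
    (hAP : A * P = P * Aᵀ) (hBC : Bᵀ = C * P)
    (WX WC WO : Matrix (Fin N) (Fin N) ℝ)
    (hWX : WX = matIntegral fun t =>
      NormedSpace.exp (t • A) * B * C * NormedSpace.exp (t • A))
    (hWC : WC = matIntegral fun t =>
      NormedSpace.exp (t • A) * B * Bᵀ * NormedSpace.exp (t • Aᵀ))
    (hWO : WO = matIntegral fun t =>
      NormedSpace.exp (t • Aᵀ) * Cᵀ * C * NormedSpace.exp (t • A)) :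
    WX * WX = WC * WO := by
  have hdet : IsUnit P.det := (Matrix.isUnit_iff_isUnit_det P).mp hPunit
  set G : ℝ → Matrix (Fin N) (Fin N) ℝ :=
    fun t => exp (t • A) * (B * C) * exp (t • A) with hG
  have hint : ∀ i j, MeasureTheory.IntegrableOn
      (fun t => G t i j) (Set.Ioi (0:ℝ)) :=
    fun i j => CGAux.integrable_entries A hstab (B * C) i j
  have hWX' : WX = matIntegral G := by
    rw [hWX]
    congr 1
    funext t
    rw [hG]
    simp only [Matrix.mul_assoc]
  have hexp : ∀ t : ℝ, exp (t • Aᵀ) = P⁻¹ * exp (t • A) * P := by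
    intro t
    have h1 : t • Aᵀ = P⁻¹ * (t • A) * P := by
      rw [Matrix.mul_smul, Matrix.smul_mul]
      congr 1
      rw [Matrix.mul_assoc, hAP, Matrix.nonsing_inv_mul_cancel_left _ _ hdet]
    rw [h1, Matrix.exp_conj' P (t • A) hPunit]
  have hCint : ∀ t : ℝ, exp (t • A) * B * Bᵀ * exp (t • Aᵀ) = G t * P := by
    intro t
    rw [hBC, hexp t, hG]
    simp only [Matrix.mul_assoc]
    rw [Matrix.mul_nonsing_inv_cancel_left _ _ hdet]
  have hCt : Cᵀ = P⁻¹ * B := by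
    have h1 : B = P * Cᵀ := by
      have h2 := congrArg Matrix.transpose hBC
      simpa [Matrix.transpose_mul, hPsymm] using h2
    rw [h1, Matrix.nonsing_inv_mul_cancel_left _ _ hdet]
  have hOint : ∀ t : ℝ, exp (t • Aᵀ) * Cᵀ * C * exp (t • A) = P⁻¹ * G t := by
    intro t
    rw [hexp t, hCt, hG]
    simp only [Matrix.mul_assoc]
    rw [Matrix.mul_nonsing_inv_cancel_left _ _ hdet]
  have hWC' : WC = WX * P := by
    rw [hWC, hWX', funext hCint, CGAux.matIntegral_mul_right G hint P]
  have hWO' : WO = P⁻¹ * WX := by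
    rw [hWO, hWX', funext hOint, CGAux.matIntegral_mul_left G hint P⁻¹]
  rw [hWC', hWO', Matrix.mul_assoc, Matrix.mul_nonsing_inv_cancel_left _ _ hdet]
end

section
/- For a stable SISO system (A, b, c) with A ∈ ℝ^{N×N}, b ∈ ℝ^{N×1}, c ∈ ℝ^{1×N}, the cross Gramian satisfies W_X² = W_C W_O. -/
open Matrix MeasureTheory

section AuxDecay

attribute [local instance] Matrix.linftyOpNormedRing Matrix.linftyOpNormedAlgebra
  Matrix.linftyOpNormedAddCommGroup Matrix.linftyOpNormedSpace

lemma mulVec_exp_eigen {n : ℕ} (M : Matrix (Fin n) (Fin n) ℂ) (lam : ℂ) (w : Fin n → ℂ)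
    (h : M.mulVec w = lam • w) :
    (NormedSpace.exp M).mulVec w = Complex.exp lam • w := by
  have hpow : ∀ k : ℕ, (M ^ k).mulVec w = (lam ^ k) • w := by
    intro k
    induction k with
    | zero => simp [Matrix.one_mulVec]
    | succ k ih =>
      rw [pow_succ, ← Matrix.mulVec_mulVec, h, Matrix.mulVec_smul, ih, pow_succ]
      rw [smul_smul, mul_comm]
  let L : Matrix (Fin n) (Fin n) ℂ →ₗ[ℂ] (Fin n → ℂ) :=
    { toFun := fun X => X.mulVec w
      map_add' := fun X Y => Matrix.add_mulVec X Y w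
      map_smul' := fun a X => Matrix.smul_mulVec a X w }
  have hL : Continuous L := L.continuous_of_finiteDimensional
  have hsum := NormedSpace.expSeries_summable' (𝕂 := ℂ) M
  have : (NormedSpace.exp M).mulVec w
      = ∑' k : ℕ, (((k.factorial :ℂ)⁻¹) • M ^ k).mulVec w := by
    rw [NormedSpace.exp_eq_tsum ℂ]
    exact (hsum.hasSum.mapL ⟨L, hL⟩).tsum_eq.symm
  rw [this]
  have : ∀ k : ℕ, (((k.factorial : ℂ)⁻¹) • M ^ k).mulVec w
      = (((k.factorial : ℂ)⁻¹) * lam ^ k) • w := by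
    intro k
    rw [Matrix.smul_mulVec, hpow k, smul_smul]
  rw [tsum_congr this, Summable.tsum_smul_const, Complex.exp_eq_exp_ℂ, NormedSpace.exp_eq_tsum ℂ]
  · norm_num
  · have := NormedSpace.expSeries_summable' (𝕂 := ℂ) lam
    simpa [smul_eq_mul] using this

lemma spectrum_exp_subset {n : ℕ} (M : Matrix (Fin n) (Fin n) ℂ) (μ : ℂ)
    (hμ : μ ∈ spectrum ℂ (NormedSpace.exp M)) :
    ∃ lam ∈ spectrum ℂ M, μ = Complex.exp lam := by
  let φ := Matrix.toLinAlgEquiv' (n := Fin n) (R := ℂ)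
  have hμ' : μ ∈ spectrum ℂ (φ (NormedSpace.exp M)) := by
    rwa [AlgEquiv.spectrum_eq]
  have heig : Module.End.HasEigenvalue (φ (NormedSpace.exp M)) μ :=
    Module.End.hasEigenvalue_iff_mem_spectrum.mpr hμ'
  set W := Module.End.eigenspace (φ (NormedSpace.exp M)) μ with hW
  have hWbot : W ≠ ⊥ := heig
  have hcomm : Commute M (NormedSpace.exp M) := (Commute.refl M).exp_right
  have hinv : ∀ x ∈ W, φ M x ∈ W := by
    intro x hx
    rw [hW, Module.End.mem_eigenspace_iff] at hx ⊢
    have : φ (NormedSpace.exp M) (φ M x) = φ M (φ (NormedSpace.exp M) x) := by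
      have := congrArg φ hcomm.eq
      rw [_root_.map_mul, _root_.map_mul] at this
      exact (LinearMap.congr_fun this.symm x)
    rw [this, hx, _root_.map_smul]
  have : Nontrivial W := Submodule.nontrivial_iff_ne_bot.mpr hWbot
  let g : Module.End ℂ W := (φ M).restrict hinv
  obtain ⟨lam, hlam⟩ := Module.End.exists_eigenvalue g
  obtain ⟨v, hv⟩ := hlam.exists_hasEigenvector
  have hv0 : (v : Fin n → ℂ) ≠ 0 := by
    simpa [Submodule.coe_eq_zero] using hv.right
  have hgv : φ M (v : Fin n → ℂ) = lam • (v : Fin n → ℂ) := by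
    have := congrArg (Subtype.val) (Module.End.mem_eigenspace_iff.mp hv.left)
    simpa [LinearMap.restrict_apply, g] using this
  have hMv : M.mulVec (v : Fin n → ℂ) = lam • (v : Fin n → ℂ) := by
    simpa [φ, Matrix.toLinAlgEquiv'_apply] using hgv
  have hlamspec : lam ∈ spectrum ℂ M := by
    rw [← AlgEquiv.spectrum_eq φ, ← Module.End.hasEigenvalue_iff_mem_spectrum]
    exact Module.End.hasEigenvalue_of_hasEigenvector ⟨Module.End.mem_eigenspace_iff.mpr hgv, hv0⟩
  refine ⟨lam, hlamspec, ?_⟩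
  have h1 : (NormedSpace.exp M).mulVec (v : Fin n → ℂ) = Complex.exp lam • (v : Fin n → ℂ) :=
    mulVec_exp_eigen M lam _ hMv
  have h2 : (NormedSpace.exp M).mulVec (v : Fin n → ℂ) = μ • (v : Fin n → ℂ) := by
    have := Module.End.mem_eigenspace_iff.mp v.2
    simpa [φ, Matrix.toLinAlgEquiv'_apply] using this
  have : (μ - Complex.exp lam) • (v : Fin n → ℂ) = 0 := by
    rw [sub_smul, ← h1, ← h2, sub_self]
  rcases smul_eq_zero.mp this with h | h
  · exact (sub_eq_zero.mp h)
  · exact absurd h hv0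


lemma entry_le_norm {n m : ℕ} (X : Matrix (Fin n) (Fin m) ℂ) (i : Fin n) (j : Fin m) :
    ‖X i j‖ ≤ ‖X‖ := by
  have h1 : X.mulVec (Pi.single j 1) = fun i => X i j := by
    ext i
    simp [Matrix.mulVec_single]
  have h2 : ‖X.mulVec (Pi.single j 1)‖ ≤ ‖X‖ * ‖(Pi.single j 1 : Fin m → ℂ)‖ :=
    Matrix.linfty_opNorm_mulVec X _
  have h3 : ‖(Pi.single j 1 : Fin m → ℂ)‖ ≤ 1 := by
    rw [pi_norm_le_iff_of_nonneg (by norm_num)]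
    intro k
    rcases eq_or_ne k j with rfl | hk
    · simp
    · simp [Pi.single_eq_of_ne hk]
  calc ‖X i j‖ = ‖(X.mulVec (Pi.single j 1)) i‖ := by rw [h1]
    _ ≤ ‖X.mulVec (Pi.single j 1)‖ := norm_le_pi_norm _ i
    _ ≤ ‖X‖ * 1 := h2.trans (by nlinarith [norm_nonneg (X.mulVec (Pi.single j 1)), norm_nonneg X])
    _ = ‖X‖ := mul_one _

lemma real_exp_map_complex {n : ℕ} (X : Matrix (Fin n) (Fin n) ℝ) :
    (NormedSpace.exp X).map Complex.ofReal = NormedSpace.exp (X.map Complex.ofReal) := by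
  let φ : Matrix (Fin n) (Fin n) ℝ →ₐ[ℝ] Matrix (Fin n) (Fin n) ℂ :=
    (Complex.ofRealAm).mapMatrix
  have hφ : Continuous φ := φ.toLinearMap.continuous_of_finiteDimensional
  have h1 : φ (NormedSpace.exp X) = NormedSpace.exp (φ X) :=
    NormedSpace.map_exp φ hφ X
  have h2 : NormedSpace.exp (φ X) = NormedSpace.exp (φ X) :=
    rfl
  have hφX : φ X = X.map Complex.ofReal := rfl
  rw [← hφX, ← h2, ← h1]
  rfl

set_option maxHeartbeats 1000000 in
lemma stable_decay {N : ℕ} (A : Matrix (Fin N) (Fin N) ℝ) (hstab : IsStableMatrix A) :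
    ∃ C ε : ℝ, 0 < C ∧ 0 < ε ∧ ∀ t : ℝ, 0 ≤ t → ∀ i j,
      |NormedSpace.exp (t • A) i j| ≤ C * Real.exp (-ε * t) := by
  rcases Nat.eq_zero_or_pos N with hN | hN
  · subst hN
    exact ⟨1, 1, one_pos, one_pos, fun t ht i j => i.elim0⟩
  have : NeZero N := ⟨hN.ne'⟩
  set M : Matrix (Fin N) (Fin N) ℂ := A.map Complex.ofReal with hM
  set E : Matrix (Fin N) (Fin N) ℂ := NormedSpace.exp M with hE
  -- spectral radius of E is < 1
  have hnt : Nontrivial (Matrix (Fin N) (Fin N) ℂ) := inferInstance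
  obtain ⟨μ₀, hμ₀mem, hμ₀max⟩ :=
    (spectrum.isCompact (𝕜 := ℂ) E).exists_isMaxOn (spectrum.nonempty E)
      (continuous_norm.continuousOn)
  have habs : ∀ μ ∈ spectrum ℂ E, ‖μ‖ < 1 := by
    intro μ hμ
    obtain ⟨lam, hlam, rfl⟩ := spectrum_exp_subset M μ hμ
    rw [Complex.norm_exp]
    exact Real.exp_lt_one_iff.mpr (hstab lam hlam)
  have hρ : spectralRadius ℂ E < 1 := by
    rw [spectralRadius]
    have : ∀ μ ∈ spectrum ℂ E, (‖μ‖₊ : ENNReal) ≤ (‖μ₀‖₊ : ENNReal) := by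
      intro μ hμ
      exact_mod_cast ENNReal.coe_le_coe.mpr (by exact_mod_cast hμ₀max hμ)
    refine lt_of_le_of_lt (iSup₂_le this) ?_
    have := habs μ₀ hμ₀mem
    rw [← ENNReal.coe_one]
    exact_mod_cast ENNReal.coe_lt_coe.mpr (by exact_mod_cast this)
  -- choose r strictly between the spectral radius and 1
  have hρtop : spectralRadius ℂ E ≠ ⊤ := (hρ.trans (by norm_num)).ne
  set r : ℝ := ((spectralRadius ℂ E).toReal + 1) / 2 with hr
  have hρ1 : (spectralRadius ℂ E).toReal < 1 := by
    have := (ENNReal.toReal_lt_toReal hρtop (by norm_num)).mpr hρ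
    simpa using this
  have hρ0 : 0 ≤ (spectralRadius ℂ E).toReal := ENNReal.toReal_nonneg
  have hr0 : 0 < r := by positivity
  have hr1 : r < 1 := by rw [hr]; linarith
  have hρr : spectralRadius ℂ E < ENNReal.ofReal r := by
    rw [← ENNReal.ofReal_toReal hρtop]
    exact (ENNReal.ofReal_lt_ofReal_iff hr0).mpr (by rw [hr]; linarith)
  -- Gelfand's formula gives an eventual bound on ‖E ^ n‖
  have htend := spectrum.pow_nnnorm_pow_one_div_tendsto_nhds_spectralRadius E
  have hev : ∀ᶠ n : ℕ in Filter.atTop,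
      (‖E ^ n‖₊ : ENNReal) ^ (1 / (n : ℝ)) < ENNReal.ofReal r :=
    htend.eventually_lt_const hρr
  obtain ⟨n₀, hn₀⟩ := Filter.eventually_atTop.mp hev
  have hpow : ∀ n, max n₀ 1 ≤ n → ‖E ^ n‖ ≤ r ^ n := by
    intro n hn
    have hn1 : 1 ≤ n := le_trans (le_max_right _ _) hn
    have hx := hn₀ n (le_trans (le_max_left _ _) hn)
    have hnne : (n : ℝ) ≠ 0 := by positivity
    have h2 : ((‖E ^ n‖₊ : ENNReal) ^ (1 / (n : ℝ))) ^ (n : ℝ)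
        < (ENNReal.ofReal r) ^ (n : ℝ) :=
      ENNReal.rpow_lt_rpow hx (by positivity)
    rw [← ENNReal.rpow_mul, one_div, inv_mul_cancel₀ hnne, ENNReal.rpow_one] at h2
    rw [ENNReal.ofReal_rpow_of_pos hr0] at h2
    have h3 := (ENNReal.lt_ofReal_iff_toReal_lt ENNReal.coe_ne_top).mp h2
    rw [ENNReal.coe_toReal, coe_nnnorm] at h3
    rw [← Real.rpow_natCast]
    exact h3.le
  -- bound on the compact interval [0, 1]
  obtain ⟨C₂, hC₂⟩ := (isCompact_Icc (a := (0:ℝ)) (b := 1)).exists_bound_of_continuousOn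
    (f := fun s : ℝ => NormedSpace.exp (s • M))
    ((NormedSpace.exp_continuous.comp (continuous_id.smul continuous_const)).continuousOn)
  -- uniform geometric bound on powers
  set n₁ := max n₀ 1 with hn₁
  set C₃ : ℝ := 1 + ∑ k ∈ Finset.range n₁, ‖E ^ k‖ / r ^ k with hC₃
  have hC₃1 : 1 ≤ C₃ := by
    rw [hC₃]
    have : 0 ≤ ∑ k ∈ Finset.range n₁, ‖E ^ k‖ / r ^ k :=
      Finset.sum_nonneg fun k _ => by positivity
    linarith
  have hEn : ∀ n : ℕ, ‖E ^ n‖ ≤ C₃ * r ^ n := by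
    intro n
    rcases le_or_gt n₁ n with h | h
    · calc ‖E ^ n‖ ≤ r ^ n := hpow n h
        _ ≤ C₃ * r ^ n := by nlinarith [pow_pos hr0 n]
    · have hmem : n ∈ Finset.range n₁ := Finset.mem_range.mpr h
      have h4 : ‖E ^ n‖ / r ^ n ≤ C₃ := by
        rw [hC₃]
        have := Finset.single_le_sum (f := fun k => ‖E ^ k‖ / r ^ k)
          (fun k _ => by positivity) hmem
        linarith
      have hrn : (0:ℝ) < r ^ n := pow_pos hr0 n
      calc ‖E ^ n‖ = (‖E ^ n‖ / r ^ n) * r ^ n := by field_simp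
        _ ≤ C₃ * r ^ n := by nlinarith
  set C₂' : ℝ := max C₂ 1 with hC₂'
  have hC₂'pos : (0:ℝ) < C₂' := lt_of_lt_of_le one_pos (le_max_right _ _)
  refine ⟨C₃ * C₂' / r, -Real.log r, by positivity, ?_, ?_⟩
  · have := Real.log_neg hr0 hr1
    linarith
  intro t ht i j
  -- split t = n + s
  set n := ⌊t⌋₊ with hn
  set s := t - n with hs
  have hs0 : 0 ≤ s := sub_nonneg.mpr (Nat.floor_le ht)
  have hs1 : s ≤ 1 := by
    have := Nat.lt_floor_add_one t
    rw [hs]; push_cast; linarith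
  have hsplit : NormedSpace.exp (t • M) = E ^ n * NormedSpace.exp (s • M) := by
    have h5 : t • M = (n : ℝ) • M + s • M := by
      rw [← add_smul]; congr 1; rw [hs]; ring
    rw [h5, Matrix.exp_add_of_commute _ _ (((Commute.refl M).smul_left (n:ℝ)).smul_right s)]
    congr 1
    rw [Nat.cast_smul_eq_nsmul ℝ n M, Matrix.exp_nsmul]
  -- entrywise bound
  have hmap : (t • A).map Complex.ofReal = t • M := by
    ext i' j'
    simp [Matrix.map_apply, hM, Complex.real_smul]
  have hentry : |NormedSpace.exp (t • A) i j| ≤ ‖NormedSpace.exp (t • M)‖ := by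
    have h6 : ‖((NormedSpace.exp (t • A)).map Complex.ofReal) i j‖
        = |NormedSpace.exp (t • A) i j| := by
      simp [Matrix.map_apply, Complex.norm_real]
    rw [← h6, real_exp_map_complex, hmap]
    exact entry_le_norm _ i j
  have hnorm : ‖NormedSpace.exp (t • M)‖ ≤ C₃ * r ^ n * C₂' := by
    rw [hsplit]
    have h7 : ‖NormedSpace.exp (s • M)‖ ≤ C₂' :=
      le_trans (hC₂ s ⟨hs0, hs1⟩) (le_max_left _ _)
    calc ‖E ^ n * NormedSpace.exp (s • M)‖
        ≤ ‖E ^ n‖ * ‖NormedSpace.exp (s • M)‖ := norm_mul_le _ _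
      _ ≤ (C₃ * r ^ n) * C₂' := by
          have := hEn n
          have h8 : (0:ℝ) ≤ ‖NormedSpace.exp (s • M)‖ := norm_nonneg _
          nlinarith [norm_nonneg (E ^ n), pow_pos hr0 n, hC₂'pos]
  -- convert r ^ n into the exponential bound
  have hrt : r ^ n ≤ Real.exp (-(-Real.log r) * t) / r := by
    have h9 : Real.exp (-(-Real.log r) * t) = r ^ (t : ℝ) := by
      rw [Real.rpow_def_of_pos hr0]
      ring_nf
    rw [h9]
    have h12 : r ^ ((n:ℝ)) ≤ r ^ (t - 1) := by
      apply Real.rpow_le_rpow_of_exponent_ge hr0 hr1.le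
      have := Nat.lt_floor_add_one t
      push_cast
      linarith
    have h13 : r ^ (t - 1) = r ^ (t:ℝ) / r := by
      rw [Real.rpow_sub hr0, Real.rpow_one]
    rw [← Real.rpow_natCast r n]
    exact h12.trans h13.le
  have hC₃0 : (0:ℝ) < C₃ := lt_of_lt_of_le one_pos hC₃1
  have h20 : C₃ * r ^ n * C₂' ≤ C₃ * (Real.exp (-(-Real.log r) * t) / r) * C₂' :=
    mul_le_mul_of_nonneg_right (mul_le_mul_of_nonneg_left hrt hC₃0.le) hC₂'pos.le
  have h21 : C₃ * (Real.exp (-(-Real.log r) * t) / r) * C₂'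
      = C₃ * C₂' / r * Real.exp (-(-Real.log r) * t) := by ring
  exact le_trans hentry (le_trans hnorm (h21 ▸ h20))

lemma exp_entry_continuous {N : ℕ} (A : Matrix (Fin N) (Fin N) ℝ) (i j : Fin N) :
    Continuous fun t : ℝ => NormedSpace.exp (t • A) i j := by
  have h1 : Continuous fun t : ℝ => NormedSpace.exp (t • A) :=
    NormedSpace.exp_continuous.comp (continuous_id.smul continuous_const)
  exact (continuous_apply j).comp ((continuous_apply i).comp h1)

end AuxDecay

lemma integrableOn_mul_of_decay {f g : ℝ → ℝ} {Kf Kg ε : ℝ} (hε : 0 < ε)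
    (hfc : Continuous f) (hgc : Continuous g)
    (hf : ∀ t, 0 ≤ t → |f t| ≤ Kf * Real.exp (-ε * t))
    (hg : ∀ t, 0 ≤ t → |g t| ≤ Kg * Real.exp (-ε * t)) :
    IntegrableOn (fun t => f t * g t) (Set.Ioi (0:ℝ)) := by
  refine Integrable.mono' (g := fun t => (Kf * Kg) * Real.exp (-(2*ε) * t)) ?_ ?_ ?_
  · exact (exp_neg_integrableOn_Ioi 0 (by linarith)).const_mul _
  · exact (hfc.mul hgc).aestronglyMeasurable.restrict
  · filter_upwards [ae_restrict_mem measurableSet_Ioi] with t ht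
    have h1 := hf t (le_of_lt ht)
    have h2 := hg t (le_of_lt ht)
    have h3 : ‖f t * g t‖ = |f t| * |g t| := by
      rw [Real.norm_eq_abs, abs_mul]
    rw [h3]
    calc |f t| * |g t| ≤ (Kf * Real.exp (-ε * t)) * (Kg * Real.exp (-ε * t)) :=
          mul_le_mul h1 h2 (abs_nonneg _) (le_trans (abs_nonneg _) h1)
      _ = (Kf * Kg) * Real.exp (-(2*ε) * t) := by
          rw [mul_mul_mul_comm, ← Real.exp_add]
          ring_nf

lemma double_sum_integral {n : ℕ} (a b : Fin n → ℝ → ℝ)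
    (ha : ∀ k, IntegrableOn (a k) (Set.Ioi (0:ℝ)))
    (hb : ∀ k, IntegrableOn (b k) (Set.Ioi (0:ℝ))) :
    ∑ k : Fin n, (∫ t in Set.Ioi (0:ℝ), a k t) * (∫ s in Set.Ioi (0:ℝ), b k s)
      = ∫ t in Set.Ioi (0:ℝ), ∫ s in Set.Ioi (0:ℝ), ∑ k : Fin n, a k t * b k s := by
  calc ∑ k : Fin n, (∫ t in Set.Ioi (0:ℝ), a k t) * (∫ s in Set.Ioi (0:ℝ), b k s)
      = ∑ k : Fin n, ∫ t in Set.Ioi (0:ℝ), a k t * (∫ s in Set.Ioi (0:ℝ), b k s) := by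
        refine Finset.sum_congr rfl fun k _ => ?_
        rw [integral_mul_const]
    _ = ∫ t in Set.Ioi (0:ℝ), ∑ k : Fin n, a k t * (∫ s in Set.Ioi (0:ℝ), b k s) :=
        (integral_finset_sum _ fun k _ => (ha k).mul_const _).symm
    _ = ∫ t in Set.Ioi (0:ℝ), ∑ k : Fin n, ∫ s in Set.Ioi (0:ℝ), a k t * b k s := by
        congr 1
        funext t
        exact Finset.sum_congr rfl fun k _ => (integral_const_mul _ _).symm
    _ = ∫ t in Set.Ioi (0:ℝ), ∫ s in Set.Ioi (0:ℝ), ∑ k : Fin n, a k t * b k s := by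
        congr 1
        funext t
        exact (integral_finset_sum _ fun k _ => (hb k).const_mul _).symm

theorem siso_cross_gramian_sq_eq_gramian_product
    {N : ℕ} (A : Matrix (Fin N) (Fin N) ℝ)
    (b : Matrix (Fin N) (Fin 1) ℝ) (c : Matrix (Fin 1) (Fin N) ℝ)
    (hstab : IsStableMatrix A)
    (WX WC WO : Matrix (Fin N) (Fin N) ℝ)
    (hWX : WX = matIntegral fun t =>
      NormedSpace.exp (t • A) * b * c * NormedSpace.exp (t • A))
    (hWC : WC = matIntegral fun t =>
      NormedSpace.exp (t • A) * b * bᵀ * NormedSpace.exp (t • Aᵀ))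
    (hWO : WO = matIntegral fun t =>
      NormedSpace.exp (t • Aᵀ) * cᵀ * c * NormedSpace.exp (t • A)) :
    WX * WX = WC * WO := by
  obtain ⟨C, ε, hC, hε, hbd₀⟩ := stable_decay A hstab
  have hbd : ∀ t : ℝ, 0 ≤ t → ∀ i j : Fin N,
      |NormedSpace.exp (t • A) i j| ≤ C * Real.exp (-ε * t) := hbd₀
  have hexpc : ∀ i j : Fin N, Continuous fun t : ℝ => NormedSpace.exp (t • A) i j :=
    fun i j => exp_entry_continuous A i j
  set E : ℝ → Matrix (Fin N) (Fin N) ℝ := fun t => NormedSpace.exp (t • A) with hE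
  set u : Fin N → ℝ → ℝ := fun i t => (E t * b) i 0 with hu
  set v : Fin N → ℝ → ℝ := fun j t => (c * E t) 0 j with hv
  -- rank-one entry formula
  have hrank1 : ∀ {X : Matrix (Fin N) (Fin 1) ℝ} {Y : Matrix (Fin 1) (Fin N) ℝ}
      (i j : Fin N), (X * Y) i j = X i 0 * Y 0 j := by
    intro X Y i j
    rw [Matrix.mul_apply, Fin.sum_univ_one]
  -- transpose exponential
  have hTexp : ∀ t : ℝ, NormedSpace.exp (t • Aᵀ) = (E t)ᵀ := by
    intro t
    rw [hE, ← Matrix.transpose_smul, Matrix.exp_transpose]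
  -- entry descriptions of the three Gramians
  have hWXij : ∀ i j, WX i j = ∫ t in Set.Ioi (0:ℝ), u i t * v j t := by
    intro i j
    rw [hWX]
    show (∫ t in Set.Ioi (0:ℝ), (E t * b * c * E t) i j) = _
    congr 1
    funext t
    rw [Matrix.mul_assoc (E t * b) c (E t), hrank1]
  have hWCij : ∀ i j, WC i j = ∫ t in Set.Ioi (0:ℝ), u i t * u j t := by
    intro i j
    rw [hWC]
    show (∫ t in Set.Ioi (0:ℝ), (E t * b * bᵀ * NormedSpace.exp (t • Aᵀ)) i j) = _
    congr 1
    funext t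
    rw [hTexp t, Matrix.mul_assoc (E t * b) bᵀ (E t)ᵀ, hrank1, ← Matrix.transpose_mul]
    rfl
  have hWOij : ∀ i j, WO i j = ∫ t in Set.Ioi (0:ℝ), v i t * v j t := by
    intro i j
    rw [hWO]
    show (∫ t in Set.Ioi (0:ℝ), (NormedSpace.exp (t • Aᵀ) * cᵀ * c * E t) i j) = _
    congr 1
    funext t
    rw [hTexp t, Matrix.mul_assoc ((E t)ᵀ * cᵀ) c (E t), hrank1, ← Matrix.transpose_mul]
    rfl
  -- continuity
  have hcu : ∀ i, Continuous (u i) := by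
    intro i
    have : ∀ t, u i t = ∑ p : Fin N, E t i p * b p 0 := by
      intro t; rw [hu]; exact Matrix.mul_apply
    simp only [funext this]
    exact continuous_finset_sum _ fun p _ =>
      (hexpc i p).mul continuous_const
  have hcv : ∀ j, Continuous (v j) := by
    intro j
    have : ∀ t, v j t = ∑ p : Fin N, c 0 p * E t p j := by
      intro t; rw [hv]; exact Matrix.mul_apply
    simp only [funext this]
    exact continuous_finset_sum _ fun p _ =>
      continuous_const.mul (hexpc p j)
  -- decay bounds
  set Kb : ℝ := (∑ p : Fin N, |b p 0|) * C with hKb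
  set Kc : ℝ := (∑ p : Fin N, |c 0 p|) * C with hKc
  have hbu : ∀ i t, 0 ≤ t → |u i t| ≤ Kb * Real.exp (-ε * t) := by
    intro i t ht
    rw [hu]
    calc |(E t * b) i 0| = |∑ p : Fin N, E t i p * b p 0| := by rw [Matrix.mul_apply]
      _ ≤ ∑ p : Fin N, |E t i p * b p 0| := Finset.abs_sum_le_sum_abs _ _
      _ ≤ ∑ p : Fin N, |b p 0| * (C * Real.exp (-ε * t)) := by
          refine Finset.sum_le_sum fun p _ => ?_
          rw [abs_mul]
          calc |E t i p| * |b p 0| ≤ (C * Real.exp (-ε * t)) * |b p 0| :=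
                mul_le_mul_of_nonneg_right (hbd t ht i p) (abs_nonneg _)
            _ = |b p 0| * (C * Real.exp (-ε * t)) := by ring
      _ = Kb * Real.exp (-ε * t) := by rw [← Finset.sum_mul, hKb]; ring
  have hbv : ∀ j t, 0 ≤ t → |v j t| ≤ Kc * Real.exp (-ε * t) := by
    intro j t ht
    rw [hv]
    calc |(c * E t) 0 j| = |∑ p : Fin N, c 0 p * E t p j| := by rw [Matrix.mul_apply]
      _ ≤ ∑ p : Fin N, |c 0 p * E t p j| := Finset.abs_sum_le_sum_abs _ _
      _ ≤ ∑ p : Fin N, |c 0 p| * (C * Real.exp (-ε * t)) := by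
          refine Finset.sum_le_sum fun p _ => ?_
          rw [abs_mul]
          exact mul_le_mul_of_nonneg_left (hbd t ht p j) (abs_nonneg _)
      _ = Kc * Real.exp (-ε * t) := by rw [← Finset.sum_mul, hKc]; ring
  -- integrability of all products
  have hiuv : ∀ i j, IntegrableOn (fun t => u i t * v j t) (Set.Ioi (0:ℝ)) :=
    fun i j => integrableOn_mul_of_decay hε (hcu i) (hcv j) (hbu i) (hbv j)
  have hiuu : ∀ i j, IntegrableOn (fun t => u i t * u j t) (Set.Ioi (0:ℝ)) :=
    fun i j => integrableOn_mul_of_decay hε (hcu i) (hcu j) (hbu i) (hbu j)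
  have hivv : ∀ i j, IntegrableOn (fun t => v i t * v j t) (Set.Ioi (0:ℝ)) :=
    fun i j => integrableOn_mul_of_decay hε (hcv i) (hcv j) (hbv i) (hbv j)
  -- the key kernel symmetry
  have hkey : ∀ t s : ℝ, ∑ k : Fin N, v k t * u k s = ∑ k : Fin N, u k t * v k s := by
    intro t s
    have hcomm : E t * E s = E s * E t := by
      show NormedSpace.exp (t • A) * NormedSpace.exp (s • A)
        = NormedSpace.exp (s • A) * NormedSpace.exp (t • A)
      rw [← Matrix.exp_add_of_commute (t • A) (s • A)
            (((Commute.refl A).smul_left t).smul_right s),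
        ← Matrix.exp_add_of_commute (s • A) (t • A)
            (((Commute.refl A).smul_left s).smul_right t),
        add_comm]
    have hassoc : ∀ (X Y : Matrix (Fin N) (Fin N) ℝ), (c * X) * (Y * b) = c * (X * Y) * b := by
      intro X Y
      rw [← Matrix.mul_assoc, Matrix.mul_assoc c X Y]
    have h1 : ∑ k : Fin N, v k t * u k s = ((c * E t) * (E s * b)) 0 0 := by
      rw [Matrix.mul_apply]
    have h2 : ∑ k : Fin N, u k t * v k s = ((c * E s) * (E t * b)) 0 0 := by
      rw [Matrix.mul_apply]
      exact Finset.sum_congr rfl fun k _ => mul_comm _ _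
    rw [h1, h2, hassoc, hassoc, hcomm]
  -- put everything together
  ext i j
  rw [Matrix.mul_apply, Matrix.mul_apply]
  have hL : ∑ k : Fin N, WX i k * WX k j
      = ∫ t in Set.Ioi (0:ℝ), ∫ s in Set.Ioi (0:ℝ),
          ∑ k : Fin N, (u i t * v k t) * (u k s * v j s) := by
    have := double_sum_integral (fun k t => u i t * v k t) (fun k s => u k s * v j s)
      (fun k => hiuv i k) (fun k => hiuv k j)
    rw [← this]
    exact Finset.sum_congr rfl fun k _ => by rw [hWXij i k, hWXij k j]
  have hR : ∑ k : Fin N, WC i k * WO k j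
      = ∫ t in Set.Ioi (0:ℝ), ∫ s in Set.Ioi (0:ℝ),
          ∑ k : Fin N, (u i t * u k t) * (v k s * v j s) := by
    have := double_sum_integral (fun k t => u i t * u k t) (fun k s => v k s * v j s)
      (fun k => hiuu i k) (fun k => hivv k j)
    rw [← this]
    exact Finset.sum_congr rfl fun k _ => by rw [hWCij i k, hWOij k j]
  rw [hL, hR]
  congr 1
  funext t
  congr 1
  funext s
  calc ∑ k : Fin N, (u i t * v k t) * (u k s * v j s)
      = (u i t * v j s) * ∑ k : Fin N, v k t * u k s := by
        rw [Finset.mul_sum]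
        exact Finset.sum_congr rfl fun k _ => by ring
    _ = (u i t * v j s) * ∑ k : Fin N, u k t * v k s := by rw [hkey t s]
    _ = ∑ k : Fin N, (u i t * u k t) * (v k s * v j s) := by
        rw [Finset.mul_sum]
        exact Finset.sum_congr rfl fun k _ => by ring
end

section
/- If A + Aᵀ is negative definite and E is symmetric positive definite, and U ∈ ℝ^{N×n} has orthonormal columns (UᵀU = I), then the reduced matrix pair (A_r, E_r) = (UᵀAU, UᵀEU) is asymptotically stable, i.e., every eigenvalue λ of the generalized eigenproblem A_r v = λ E_r v satisfies Re(λ) < 0. -/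
open Matrix

private lemma re_dot_aux {k : ℕ} (M : Matrix (Fin k) (Fin k) ℝ) (v : Fin k → ℂ) :
    (star v ⬝ᵥ (M.map (Complex.ofReal)).mulVec v).re
      = (fun i => (v i).re) ⬝ᵥ M.mulVec (fun i => (v i).re)
        + (fun i => (v i).im) ⬝ᵥ M.mulVec (fun i => (v i).im) := by
  simp only [dotProduct, mulVec, map_apply, Pi.star_apply, Complex.re_sum, Complex.mul_re,
    Complex.star_def, Complex.conj_re, Complex.conj_im, Finset.mul_sum, Complex.re_ofReal_mul,
    Complex.im_ofReal_mul, Finset.sum_neg_distrib, neg_mul, sub_neg_eq_add,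
    Complex.ofReal_re, Complex.ofReal_im]
  rw [← Finset.sum_add_distrib]
  congr 1; ext i
  rw [← Finset.sum_add_distrib]
  congr 1; ext j
  ring

private lemma im_dot_aux {k : ℕ} (M : Matrix (Fin k) (Fin k) ℝ) (v : Fin k → ℂ) :
    (star v ⬝ᵥ (M.map (Complex.ofReal)).mulVec v).im
      = (fun i => (v i).re) ⬝ᵥ M.mulVec (fun i => (v i).im)
        - (fun i => (v i).im) ⬝ᵥ M.mulVec (fun i => (v i).re) := by
  simp only [dotProduct, mulVec, map_apply, Pi.star_apply, Complex.im_sum, Complex.mul_im,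
    Complex.star_def, Complex.conj_re, Complex.conj_im, Finset.mul_sum, Complex.re_ofReal_mul,
    Complex.im_ofReal_mul, Complex.ofReal_re, Complex.ofReal_im]
  rw [← Finset.sum_sub_distrib]
  congr 1; ext i
  rw [← Finset.sum_sub_distrib]
  congr 1; ext j
  ring

-- reduced quadratic form positivity
private lemma quad_red {N n : ℕ} (M : Matrix (Fin N) (Fin N) ℝ) (hM : M.PosDef)
    (U : Matrix (Fin N) (Fin n) ℝ) (hU : Uᵀ * U = 1) :
    ∀ x : Fin n → ℝ, x ≠ 0 → 0 < x ⬝ᵥ (Uᵀ * M * U).mulVec x := by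
  intro x hx
  have hUx : U.mulVec x ≠ 0 := by
    intro h
    apply hx
    have : (Uᵀ * U).mulVec x = Uᵀ.mulVec (U.mulVec x) := by
      rw [← mulVec_mulVec]
    rw [hU, h] at this
    simpa using this
  have := hM.dotProduct_mulVec_pos hUx
  simp only [star_trivial] at this ⊢
  calc x ⬝ᵥ (Uᵀ * M * U).mulVec x
      = x ⬝ᵥ Uᵀ.mulVec (M.mulVec (U.mulVec x)) := by rw [← mulVec_mulVec, ← mulVec_mulVec]
    _ = (U.mulVec x) ⬝ᵥ M.mulVec (U.mulVec x) := by
        rw [dotProduct_mulVec, vecMul_transpose]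
    _ > 0 := this

private lemma quad_nonneg {n : ℕ} (T : Matrix (Fin n) (Fin n) ℝ)
    (hT : ∀ x : Fin n → ℝ, x ≠ 0 → 0 < x ⬝ᵥ T.mulVec x) (x : Fin n → ℝ) :
    0 ≤ x ⬝ᵥ T.mulVec x := by
  by_cases h : x = 0
  · simp [h]
  · exact (hT x h).le

theorem galerkin_projection_preserves_stability
    {N n : ℕ} (A E : Matrix (Fin N) (Fin N) ℝ)
    (hA : (-(A + Aᵀ)).PosDef) (hE : E.PosDef)
    (U : Matrix (Fin N) (Fin n) ℝ) (hU : Uᵀ * U = 1)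
    (lam : ℂ) (v : Fin n → ℂ) (hv : v ≠ 0)
    (heig : ((Uᵀ * A * U).map (Complex.ofReal)).mulVec v
      = lam • ((Uᵀ * E * U).map (Complex.ofReal)).mulVec v) :
    lam.re < 0 := by
  set a : Fin n → ℝ := fun i => (v i).re with ha
  set b : Fin n → ℝ := fun i => (v i).im with hb
  have hab : a ≠ 0 ∨ b ≠ 0 := by
    by_contra h
    push_neg at h
    apply hv
    funext i
    have h1 : a i = 0 := by rw [h.1]; rfl
    have h2 : b i = 0 := by rw [h.2]; rfl
    exact Complex.ext h1 h2
  set R : Matrix (Fin n) (Fin n) ℝ := Uᵀ * A * U with hR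
  set T : Matrix (Fin n) (Fin n) ℝ := Uᵀ * E * U with hT
  -- T quadratic form positive
  have hTpos := quad_red E hE U hU
  have hSpos := quad_red _ hA U hU
  -- S = -(R + Rᵀ)
  have hS : Uᵀ * (-(A + Aᵀ)) * U = -(R + Rᵀ) := by
    rw [hR]
    rw [transpose_mul, transpose_mul, transpose_transpose]
    simp only [Matrix.mul_neg, Matrix.neg_mul, Matrix.mul_add, Matrix.add_mul, Matrix.mul_assoc,
      neg_add_rev]
  -- R quadratic form negative
  have hRneg : ∀ x : Fin n → ℝ, x ≠ 0 → x ⬝ᵥ R.mulVec x < 0 := by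
    intro x hx
    have h1 := hSpos x hx
    rw [hS] at h1
    have h2 : x ⬝ᵥ Rᵀ.mulVec x = x ⬝ᵥ R.mulVec x := by
      rw [dotProduct_mulVec, vecMul_transpose, dotProduct_comm]
    have h3 : x ⬝ᵥ (-(R + Rᵀ)).mulVec x = -(2 * (x ⬝ᵥ R.mulVec x)) := by
      rw [neg_mulVec, dotProduct_neg, add_mulVec, dotProduct_add, h2]; ring
    rw [h3] at h1
    linarith
  have hRnonpos : ∀ x : Fin n → ℝ, x ⬝ᵥ R.mulVec x ≤ 0 := by
    intro x
    by_cases h : x = 0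
    · simp [h]
    · exact (hRneg x h).le
  set p : ℂ := star v ⬝ᵥ (R.map (Complex.ofReal)).mulVec v with hp
  set q : ℂ := star v ⬝ᵥ (T.map (Complex.ofReal)).mulVec v with hq
  have hpq : p = lam * q := by
    rw [hp, hq, heig, dotProduct_smul, smul_eq_mul]
  -- q.re > 0
  have hqre : 0 < q.re := by
    rw [hq, re_dot_aux]
    rcases hab with h | h
    · have := hTpos a h
      have h2 := quad_nonneg T hTpos b
      linarith
    · have := hTpos b h
      have h2 := quad_nonneg T hTpos a
      linarith
  -- q.im = 0
  have hTsymm : Tᵀ = T := by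
    rw [hT, transpose_mul, transpose_mul, transpose_transpose]
    have : Eᵀ = E := hE.isHermitian
    rw [this, Matrix.mul_assoc]
  have hqim : q.im = 0 := by
    rw [hq, im_dot_aux]
    have : a ⬝ᵥ T.mulVec b = b ⬝ᵥ T.mulVec a := by
      conv_lhs => rw [← hTsymm]
      rw [mulVec_transpose, dotProduct_comm, ← dotProduct_mulVec]
    rw [this, sub_self]
  -- p.re < 0
  have hpre : p.re < 0 := by
    rw [hp, re_dot_aux]
    rcases hab with h | h
    · have := hRneg a h
      have h2 := hRnonpos b
      linarith
    · have := hRneg b h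
      have h2 := hRnonpos a
      linarith
  have : p.re = lam.re * q.re := by
    rw [hpq, Complex.mul_re, hqim, mul_zero, sub_zero]
  nlinarith
end
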